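/- As λ → 0⁺ (with b > 0, n ≥ 1 fixed), the variance expression e^{−bλ}(1 − (2n+1)(e^{−nbλ} − e^{−(n+1)bλ}) − e^{−(2n+1)bλ})/(1 − e^{−bλ})² tends to 0. -/

import Mathlib

/-! With `x = e^{-bλ}`, the expression is `x P(x) / (1 - x)²` for the polynomial
`P(x) = 1 - (2n+1)(xⁿ - xⁿ⁺¹) - x²ⁿ⁺¹`, which has a triple root at `x = 1`:
`P_{n+1}(x) - x P_n(x) = (1 - x)(1 - xⁿ⁺¹)²`, and `1 - xⁿ⁺¹` is divisible by `1 - x`.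
So the expression is `x (1 - x) Q(x)` with `Q` continuous, which tends to `0` as `x → 1`. -/

open Real Filter Topology Finset

theorem exists_continuous_eq_one_sub_pow_three_mul {R : Type*} [CommRing R]
    [TopologicalSpace R] [IsTopologicalRing R] (n : ℕ) :
    ∃ Q : R → R, Continuous Q ∧ ∀ x : R,
      1 - (2 * n + 1) * (x ^ n - x ^ (n + 1)) - x ^ (2 * n + 1) = (1 - x) ^ 3 * Q x := by
  induction n with
  | zero => exact ⟨0, continuous_const, fun x => by simp⟩
  | succ n ih =>
    obtain ⟨Q, hQ, hPQ⟩ := ih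
    refine ⟨fun x => x * Q x + (∑ i ∈ range (n + 1), x ^ i) ^ 2, by fun_prop, fun x => ?_⟩
    have hgeom := mul_neg_geom_sum x (n + 1)
    push_cast
    linear_combination
      x * hPQ x - (1 - x) * (1 - x ^ (n + 1) + (1 - x) * ∑ i ∈ range (n + 1), x ^ i) * hgeom

theorem stmt9_general (b : ℝ) (n : ℕ) :
    Tendsto (fun l : ℝ => exp (-b * l) * (1 - (2 * (n : ℝ) + 1) *
        (exp (-(n : ℝ) * b * l) - exp (-((n : ℝ) + 1) * b * l))
        - exp (-(2 * (n : ℝ) + 1) * b * l)) / (1 - exp (-b * l)) ^ 2)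
      (𝓝[>] 0) (𝓝 0) := by
  obtain ⟨Q, hQ, hPQ⟩ := exists_continuous_eq_one_sub_pow_three_mul (R := ℝ) n
  -- at `x = 1` both sides vanish, the left one because `a / 0 = 0`
  have hfactor : ∀ x : ℝ, x * (1 - (2 * n + 1) * (x ^ n - x ^ (n + 1)) - x ^ (2 * n + 1))
      / (1 - x) ^ 2 = x * (1 - x) * Q x := by
    intro x
    rcases eq_or_ne (1 - x) 0 with hx | hx
    · simp [hx]
    · rw [hPQ, div_eq_iff (pow_ne_zero 2 hx)]
      ring
  have hexp_pow (k : ℕ) (l : ℝ) : exp (-(k : ℝ) * b * l) = exp (-b * l) ^ k := by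
    rw [← exp_nat_mul]
    ring_nf
  have hcont : Continuous fun l : ℝ => exp (-b * l) * (1 - exp (-b * l)) * Q (exp (-b * l)) :=
    by fun_prop
  have hlim := (hcont.tendsto 0).mono_left (nhdsWithin_le_nhds (s := Set.Ioi 0))
  convert hlim using 2 with l
  · rw [← hfactor, ← hexp_pow, ← hexp_pow, ← hexp_pow]
    push_cast
    ring_nf
  · simp

/-- As `λ → 0⁺`, the conditional variance expression
`e^{-bλ}(1 - (2n+1)(e^{-nbλ} - e^{-(n+1)bλ}) - e^{-(2n+1)bλ})/(1-e^{-bλ})²` tends to `0`. -/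
theorem stmt9 (b : ℝ) (n : ℕ) (hb : 0 < b) (hn : 1 ≤ n) :
    Tendsto (fun l : ℝ => exp (-b * l) * (1 - (2 * (n : ℝ) + 1) *
        (exp (-(n : ℝ) * b * l) - exp (-((n : ℝ) + 1) * b * l))
        - exp (-(2 * (n : ℝ) + 1) * b * l)) / (1 - exp (-b * l)) ^ 2)
      (𝓝[>] 0) (𝓝 0) :=
  stmt9_general b n
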